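/- arXiv:1405.0186 — 2 statements merged into one kernel-verified Lean document; each statement's English description precedes it below -/
import Mathlib

section
/- Let p be a symmetric heat kernel on X satisfying the lower Gaussian bound with constants C ≥ 1 and C₁ > 0, with associated semigroup T_t. Then for every μ-measurable set E ⊆ X and every t > 0, (1/√t) ∫_{Δ^{√t}} |χ_E(x) − χ_E(y)| / (√(μ(B(x,√t)))·√(μ(B(y,√t)))) d(μ⊗μ)(x,y) ≤ (C'/√t) ∫_{E^{√t} \ E} T_t χ_E dμ, where C' depends only on C and C₁. -/
/-!
On the strip `d(x,y) < √t` the Gaussian factor in the lower bound is at least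
`C⁻¹ e^{-1/C₁}`, so the weight `(μ(B(x,√t)) μ(B(y,√t)))^{-1/2}` is at most a constant times
`p(t,x,y)`. The jump `|χ_E(x) - χ_E(y)|` vanishes unless one of the two points lies in `E`
and the other, being within `√t` of it, in `E^{√t} \ E`; by the symmetry of `p` both orders
contribute equally, and integrating out the point in `E` leaves `∫_{E^{√t} \ E} T_t χ_E`.
-/

open MeasureTheory Metric Filter Topology
open scoped ENNReal NNReal

noncomputable section

/-- Local Lipschitz constant (pointwise lower dilation), valued in `ℝ≥0∞`. -/
def locLip {X : Type*} [MetricSpace X] (u : X → ℝ) (y : X) : ℝ≥0∞ :=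
  Filter.liminf
    (fun ρ : ℝ => ⨆ z ∈ Metric.ball y ρ, ENNReal.ofReal (|u y - u z| / dist y z))
    (𝓝[>] (0 : ℝ))

/-- `μ` is doubling with constant `cD`:
`0 < μ(B(x,2r)) ≤ cD·μ(B(x,r)) < ∞` for every `x` and `r > 0`. -/
def IsDoubling {X : Type*} [MetricSpace X] [MeasurableSpace X] (μ : Measure X)
    (cD : ℝ≥0∞) : Prop :=
  ∀ (x : X) (r : ℝ), 0 < r →
    0 < μ (Metric.ball x (2 * r)) ∧ μ (Metric.ball x (2 * r)) ≤ cD * μ (Metric.ball x r) ∧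
      μ (Metric.ball x r) < ⊤

/-- `X` supports a 1-Poincaré inequality with constants `cP` and `lam`. -/
def PoincareOne {X : Type*} [MetricSpace X] [MeasurableSpace X] (μ : Measure X)
    (cP lam : ℝ) : Prop :=
  ∀ u : X → ℝ, (∃ K : NNReal, LipschitzWith K u) →
    ∀ (x : X) (r : ℝ), 0 < r →
      ∫⁻ y in Metric.ball x r, ENNReal.ofReal |u y - ⨍ z in Metric.ball x r, u z ∂μ| ∂μ ≤
        ENNReal.ofReal (cP * r) * ∫⁻ y in Metric.ball x (lam * r), locLip u y ∂μ

/-- `f` is locally Lipschitz on the set `F`. -/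
def LocLipOn {X : Type*} [MetricSpace X] (F : Set X) (f : X → ℝ) : Prop :=
  ∀ x ∈ F, ∃ (K : NNReal) (t : Set X), t ∈ 𝓝[F] x ∧ LipschitzOnWith K f t

/-- Total variation `‖Du‖(F)` of `u` on an open set `F`. -/
def totalVar {X : Type*} [MetricSpace X] [MeasurableSpace X] (μ : Measure X)
    (u : X → ℝ) (F : Set X) : ℝ≥0∞ :=
  sInf { E : ℝ≥0∞ | ∃ v : ℕ → X → ℝ,
    (∀ j, LocLipOn F (v j)) ∧
    (∀ K : Set X, IsCompact K → K ⊆ F →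
      Filter.Tendsto (fun j => ∫⁻ x in K, ENNReal.ofReal |v j x - u x| ∂μ)
        Filter.atTop (𝓝 0)) ∧
    E = Filter.liminf (fun j => ∫⁻ x in F, locLip (v j) x ∂μ) Filter.atTop }

/-- Near-diagonal Korevaar–Schoen type energy. -/
def diagEnergy {X : Type*} [MetricSpace X] [MeasurableSpace X] (μ : Measure X)
    (u : X → ℝ) (ε : ℝ) : ℝ≥0∞ :=
  (ENNReal.ofReal ε)⁻¹ *
    ∫⁻ q in {q : X × X | dist q.1 q.2 < ε},
      ENNReal.ofReal |u q.1 - u q.2| /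
        (μ (Metric.ball q.1 ε) ^ ((1:ℝ)/2) * μ (Metric.ball q.2 ε) ^ ((1:ℝ)/2)) ∂(μ.prod μ)

/-- A symmetric heat kernel: jointly measurable and symmetric in the space variables. -/
def SymmHeatKernel {X : Type*} [MetricSpace X] [MeasurableSpace X]
    (p : ℝ → X → X → ℝ≥0∞) : Prop :=
  Measurable (fun q : ℝ × X × X => p q.1 q.2.1 q.2.2) ∧
    ∀ (t : ℝ) (x y : X), 0 < t → p t x y = p t y x

/-- Lower Gaussian bound for the heat kernel. -/
def LowerGaussianBound {X : Type*} [MetricSpace X] [MeasurableSpace X] (μ : Measure X)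
    (p : ℝ → X → X → ℝ≥0∞) (C C₁ : ℝ) : Prop :=
  ∀ (t : ℝ), 0 < t → ∀ x y : X,
    ENNReal.ofReal (C⁻¹ * Real.exp (-(dist x y) ^ 2 / (C₁ * t))) /
        (μ (Metric.ball x (Real.sqrt t)) ^ ((1:ℝ)/2) *
          μ (Metric.ball y (Real.sqrt t)) ^ ((1:ℝ)/2)) ≤ p t x y

/-- Upper Gaussian bound for the heat kernel. -/
def UpperGaussianBound {X : Type*} [MetricSpace X] [MeasurableSpace X] (μ : Measure X)
    (p : ℝ → X → X → ℝ≥0∞) (C C₂ : ℝ) : Prop :=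
  ∀ (t : ℝ), 0 < t → ∀ x y : X,
    p t x y ≤ ENNReal.ofReal (C * Real.exp (-(dist x y) ^ 2 / (C₂ * t))) /
        (μ (Metric.ball x (Real.sqrt t)) ^ ((1:ℝ)/2) *
          μ (Metric.ball y (Real.sqrt t)) ^ ((1:ℝ)/2))

/-- The heat semigroup applied to the characteristic function of `E`:
`T_t χ_E (x) = ∫_E p(t,x,y) dμ(y)`. -/
def heatSet {X : Type*} [MetricSpace X] [MeasurableSpace X] (μ : Measure X)
    (p : ℝ → X → X → ℝ≥0∞) (t : ℝ) (E : Set X) (x : X) : ℝ≥0∞ :=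
  ∫⁻ y in E, p t x y ∂μ

/-- Tubular neighborhood `E^r = ⋃_{x ∈ E} B(x,r)`. -/
def tub {X : Type*} [MetricSpace X] (E : Set X) (r : ℝ) : Set X :=
  ⋃ x ∈ E, Metric.ball x r

open Set

theorem IsDoubling.sigmaFinite {X : Type*} [MetricSpace X] [MeasurableSpace X] {μ : Measure X}
    {cD : ℝ≥0∞} (h : IsDoubling μ cD) : SigmaFinite μ := by
  rcases isEmpty_or_nonempty X with _ | ⟨⟨x₀⟩⟩
  · rw [μ.eq_zero_of_isEmpty]
    infer_instance
  · exact ⟨⟨⟨fun n : ℕ => ball x₀ (n + 1), fun _ => trivial,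
      fun n => (h x₀ (n + 1) (by positivity)).2.2, iUnion_ball_nat_succ x₀⟩⟩⟩

theorem isOpen_tub {X : Type*} [MetricSpace X] (E : Set X) (r : ℝ) : IsOpen (tub E r) :=
  isOpen_biUnion fun _ _ => isOpen_ball

theorem mem_tub_of_dist_lt {X : Type*} [MetricSpace X] {E : Set X} {r : ℝ} {x y : X}
    (hy : y ∈ E) (hxy : dist x y < r) : x ∈ tub E r :=
  mem_biUnion hy (mem_ball.2 hxy)

theorem ofReal_abs_indicator_sub_le {X : Type*} [MetricSpace X] (E : Set X) {r : ℝ} {x y : X}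
    (hxy : dist x y < r) :
    ENNReal.ofReal |E.indicator (fun _ => (1 : ℝ)) x - E.indicator (fun _ => (1 : ℝ)) y| ≤
      ((tub E r \ E) ×ˢ E).indicator 1 (x, y) + ((tub E r \ E) ×ˢ E).indicator 1 (y, x) := by
  by_cases hx : x ∈ E <;> by_cases hy : y ∈ E
  · simp [hx, hy]
  · simp [hx, hy, mem_tub_of_dist_lt hx (dist_comm x y ▸ hxy)]
  · simp [hx, hy, mem_tub_of_dist_lt hy hxy]
  · simp [hx, hy]

section HeatKernel

variable {X : Type*} [MetricSpace X] [MeasurableSpace X] {μ : Measure X}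
  {p : ℝ → X → X → ℝ≥0∞} {C C₁ t : ℝ}

theorem SymmHeatKernel.measurable_uncurry (hp : SymmHeatKernel p) (t : ℝ) :
    Measurable fun q : X × X => p t q.1 q.2 :=
  hp.1.comp (measurable_const.prodMk measurable_id)

/-- The Gaussian factor `C⁻¹ e^{-d²/(C₁ t)}` is at least this on the strip `d < √t`. -/
def gaussianFloor (C C₁ : ℝ) : ℝ≥0∞ :=
  ENNReal.ofReal (C⁻¹ * Real.exp (-(1 / C₁)))

theorem gaussianFloor_ne_zero (hC : 0 < C) : gaussianFloor C C₁ ≠ 0 :=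
  (ENNReal.ofReal_pos.2 (by positivity)).ne'

theorem LowerGaussianBound.gaussianFloor_div_le (hlow : LowerGaussianBound μ p C C₁)
    (hC : 0 < C) (hC₁ : 0 < C₁) (ht : 0 < t) {x y : X} (hxy : dist x y < Real.sqrt t) :
    gaussianFloor C C₁ /
        (μ (ball x (Real.sqrt t)) ^ ((1:ℝ)/2) * μ (ball y (Real.sqrt t)) ^ ((1:ℝ)/2)) ≤
      p t x y := by
  refine le_trans (ENNReal.div_le_div_right (ENNReal.ofReal_le_ofReal ?_) _) (hlow t ht x y)
  refine mul_le_mul_of_nonneg_left (Real.exp_le_exp.2 ?_) (inv_pos.2 hC).le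
  have hd : dist x y ^ 2 ≤ t := ((Real.lt_sqrt dist_nonneg).1 hxy).le
  rw [neg_div, neg_le_neg_iff, div_le_div_iff₀ (by positivity) hC₁]
  nlinarith

theorem lintegral_indicator_prod_eq_setLIntegral_heatSet [SFinite μ]
    (hp : SymmHeatKernel p) (t : ℝ) {A E : Set X} (hA : MeasurableSet A)
    (hE : MeasurableSet E) :
    ∫⁻ q, (A ×ˢ E).indicator (fun q => p t q.1 q.2) q ∂(μ.prod μ) =
      ∫⁻ x in A, heatSet μ p t E x ∂μ := by
  rw [lintegral_indicator (hA.prod hE), ← Measure.prod_restrict,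
    lintegral_prod _ (hp.measurable_uncurry t).aemeasurable]
  rfl

theorem ofReal_abs_indicator_sub_div_le (hp : SymmHeatKernel p)
    (hlow : LowerGaussianBound μ p C C₁) (hC : 0 < C) (hC₁ : 0 < C₁) (ht : 0 < t)
    (E : Set X) {x y : X} (hxy : dist x y < Real.sqrt t) :
    ENNReal.ofReal |E.indicator (fun _ => (1 : ℝ)) x - E.indicator (fun _ => (1 : ℝ)) y| /
        (μ (ball x (Real.sqrt t)) ^ ((1:ℝ)/2) * μ (ball y (Real.sqrt t)) ^ ((1:ℝ)/2)) ≤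
      (gaussianFloor C C₁)⁻¹ *
        (((tub E (Real.sqrt t) \ E) ×ˢ E).indicator (fun q => p t q.1 q.2) (x, y) +
          ((tub E (Real.sqrt t) \ E) ×ˢ E).indicator (fun q => p t q.1 q.2) (y, x)) := by
  set κ := gaussianFloor C C₁
  set D := μ (ball x (Real.sqrt t)) ^ ((1:ℝ)/2) * μ (ball y (Real.sqrt t)) ^ ((1:ℝ)/2)
  have hD : D⁻¹ ≤ κ⁻¹ * p t x y :=
    calc D⁻¹ = κ⁻¹ * (κ / D) := by
          rw [div_eq_mul_inv, ENNReal.inv_mul_cancel_left (gaussianFloor_ne_zero hC)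
            ENNReal.ofReal_ne_top]
      _ ≤ κ⁻¹ * p t x y := by grw [hlow.gaussianFloor_div_le hC hC₁ ht hxy]
  calc _ = _ * D⁻¹ := div_eq_mul_inv _ _
    _ ≤ (((tub E (Real.sqrt t) \ E) ×ˢ E).indicator 1 (x, y) +
          ((tub E (Real.sqrt t) \ E) ×ˢ E).indicator 1 (y, x)) * (κ⁻¹ * p t x y) := by
      gcongr
      exact ofReal_abs_indicator_sub_le E hxy
    _ = _ := by
      classical
      simp only [Set.indicator_apply, Pi.one_apply, hp.2 t x y ht]
      split_ifs <;> ring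

theorem diagEnergy_indicator_le [SFinite μ] [OpensMeasurableSpace X] (hp : SymmHeatKernel p)
    (hlow : LowerGaussianBound μ p C C₁) (hC : 0 < C) (hC₁ : 0 < C₁) {E : Set X}
    (hE : MeasurableSet E) (ht : 0 < t) :
    diagEnergy μ (E.indicator fun _ => (1 : ℝ)) (Real.sqrt t) ≤
      2 * (gaussianFloor C C₁)⁻¹ * (ENNReal.ofReal (Real.sqrt t))⁻¹ *
        ∫⁻ x in tub E (Real.sqrt t) \ E, heatSet μ p t E x ∂μ := by
  have hA : MeasurableSet (tub E (Real.sqrt t) \ E) := (isOpen_tub E _).measurableSet.diff hE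
  set G := ((tub E (Real.sqrt t) \ E) ×ˢ E).indicator (fun q : X × X => p t q.1 q.2)
  have hG : Measurable G := (hp.measurable_uncurry t).indicator (hA.prod hE)
  calc diagEnergy _ _ _
      ≤ (ENNReal.ofReal (Real.sqrt t))⁻¹ * ∫⁻ q in {q : X × X | dist q.1 q.2 < Real.sqrt t},
          (gaussianFloor C C₁)⁻¹ * (G q + G q.swap) ∂(μ.prod μ) := by
        rw [diagEnergy]
        gcongr _ * ?_
        exact setLIntegral_mono (by fun_prop) fun q hq =>
          ofReal_abs_indicator_sub_div_le hp hlow hC hC₁ ht E hq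
    _ ≤ (ENNReal.ofReal (Real.sqrt t))⁻¹ *
          ∫⁻ q, (gaussianFloor C C₁)⁻¹ * (G q + G q.swap) ∂(μ.prod μ) := by
        gcongr _ * ?_
        exact setLIntegral_le_lintegral _ _
    _ = (ENNReal.ofReal (Real.sqrt t))⁻¹ * ((gaussianFloor C C₁)⁻¹ *
          (2 * ∫⁻ x in tub E (Real.sqrt t) \ E, heatSet μ p t E x ∂μ)) := by
        rw [lintegral_const_mul _ (by fun_prop), lintegral_add_left hG, lintegral_prod_swap,
          lintegral_indicator_prod_eq_setLIntegral_heatSet hp t hA hE, two_mul]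
    _ = _ := by ring

end HeatKernel

/-- Under the lower Gaussian bound with constants `C, C₁` there is a
constant `C' = C'(C, C₁)` so that for every measurable `E` and `t > 0`, the
near-diagonal energy of `χ_E` at scale `√t` is bounded by
`(C'/√t) ∫_{E^{√t} \ E} T_t χ_E dμ`. -/
theorem stmt9 (C C₁ : ℝ) (hC : 1 ≤ C) (hC₁ : 0 < C₁) :
    ∃ C' : ℝ≥0∞, C' ≠ ⊤ ∧
      ∀ (X : Type) [MetricSpace X] [CompleteSpace X] [MeasurableSpace X] [BorelSpace X]
        (μ : Measure X) (cD : ℝ≥0∞), 1 ≤ cD → IsDoubling μ cD →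
        ∀ p : ℝ → X → X → ℝ≥0∞, SymmHeatKernel p → LowerGaussianBound μ p C C₁ →
          ∀ E : Set X, MeasurableSet E → ∀ t : ℝ, 0 < t →
            diagEnergy μ (E.indicator fun _ => (1 : ℝ)) (Real.sqrt t) ≤
              C' * (ENNReal.ofReal (Real.sqrt t))⁻¹ *
                ∫⁻ x in tub E (Real.sqrt t) \ E, heatSet μ p t E x ∂μ := by
  have hCpos : 0 < C := zero_lt_one.trans_le hC
  refine ⟨2 * (gaussianFloor C C₁)⁻¹,
    ENNReal.mul_ne_top ENNReal.ofNat_ne_top (ENNReal.inv_ne_top.2 (gaussianFloor_ne_zero hCpos)),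
    ?_⟩
  intro X _ _ _ _ μ cD _ hdb p hp hlow E hE t ht
  have := hdb.sigmaFinite
  exact diagEnergy_indicator_le hp hlow hCpos hC₁ hE ht
end
end

section
/- Co-area–type inequality for the near-diagonal energy: there is a constant C ≥ 1 such that for every compactly supported continuous function f : X → ℝ, with M_t = {x ∈ X : |f(x)| > t}, one has limsup_{ε→0⁺} (1/ε) ∫_0^∞ ( ∫_{M_t} ∫_{B(x,ε) \ M_t} dμ(y) dμ(x) / (√(μ(B(x,ε)))·√(μ(B(y,ε)))) ) dt ≤ C·limsup_{ε→0⁺} (1/ε) ∫_{Δ^ε} |f(x) − f(y)| / (√(μ(B(x,ε)))·√(μ(B(y,ε)))) d(μ⊗μ)(x,y). -/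
open MeasureTheory Metric Filter Topology
open scoped ENNReal NNReal

noncomputable section

lemma aux_sigmaFinite {X : Type*} [MetricSpace X] [MeasurableSpace X]
    (μ : Measure X) (cD : ℝ≥0∞) (hD : IsDoubling μ cD) : SigmaFinite μ := by
  rcases isEmpty_or_nonempty X with h | ⟨⟨x0⟩⟩
  · have : μ = 0 := by
      ext s hs
      simp [Set.eq_empty_of_isEmpty s]
    rw [this]; infer_instance
  · refine ⟨⟨⟨fun n => Metric.ball x0 (n + 1), fun _ => trivial, ?_, ?_⟩⟩⟩
    · intro n
      exact (hD x0 (n + 1) (by positivity)).2.2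
    · refine Set.eq_univ_of_forall fun x => ?_
      obtain ⟨n, hn⟩ := exists_nat_gt (dist x x0)
      exact Set.mem_iUnion.2 ⟨n, by simp only [Metric.mem_ball]; linarith⟩

lemma aux_secondCountable {X : Type*} [MetricSpace X] [MeasurableSpace X] [BorelSpace X]
    (μ : Measure X) (cD : ℝ≥0∞) (hD : IsDoubling μ cD) :
    SecondCountableTopology X := by
  refine Metric.secondCountable_of_almost_dense_set fun ε hε => ?_
  rcases isEmpty_or_nonempty X with h | ⟨⟨x0⟩⟩
  · exact ⟨∅, Set.countable_empty, fun x => (IsEmpty.false x).elim⟩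
  -- take a maximal ε-separated set S
  obtain ⟨S, hSP, hSmax⟩ :
      ∃ S, S ∈ {S : Set X | S.Pairwise fun a b => ε ≤ dist a b} ∧
        ∀ T ∈ {S : Set X | S.Pairwise fun a b => ε ≤ dist a b}, S ⊆ T → T ⊆ S := by
    have hzorn : ∀ c ⊆ {S : Set X | S.Pairwise fun a b => ε ≤ dist a b},
        IsChain (· ⊆ ·) c → ∃ ub ∈ {S : Set X | S.Pairwise fun a b => ε ≤ dist a b},
          ∀ s ∈ c, s ⊆ ub := by
      intro c hc hchain
      refine ⟨⋃₀ c, ?_, fun s hs => Set.subset_sUnion_of_mem hs⟩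
      rintro a ⟨s, hs, has⟩ b ⟨t, ht, hbt⟩ hab
      rcases hchain.total hs ht with hst | hts
      · exact hc ht (hst has) hbt hab
      · exact hc hs has (hts hbt) hab
    obtain ⟨S, hS⟩ := zorn_subset {S : Set X | S.Pairwise fun a b => ε ≤ dist a b} hzorn
    exact ⟨S, hS.1, fun T hT hST => hS.2 hT hST⟩
  refine ⟨S, ?_, fun x => ?_⟩
  · -- S is countable
    have hcover : S ⊆ ⋃ n : ℕ, S ∩ Metric.ball x0 (n + 1) := by
      intro s hs
      obtain ⟨n, hn⟩ := exists_nat_gt (dist s x0)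
      exact Set.mem_iUnion.2 ⟨n, hs, by simp only [Metric.mem_ball]; linarith⟩
    refine Set.Countable.mono hcover (Set.countable_iUnion fun n => ?_)
    set T := S ∩ Metric.ball x0 (n + 1) with hT
    have key : Set.Countable {i : T | 0 < μ (Metric.ball (i : X) (ε / 2))} := by
      refine MeasureTheory.Measure.countable_meas_pos_of_disjoint_of_meas_iUnion_ne_top μ
        (fun _ => measurableSet_ball) ?_ ?_
      · intro i j hij
        have hij' : (i : X) ≠ (j : X) := fun h => hij (Subtype.ext h)
        have hd : ε ≤ dist (i : X) (j : X) := hSP i.2.1 j.2.1 hij'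
        exact Metric.ball_disjoint_ball (by linarith)
      · refine ne_top_of_le_ne_top (hD x0 ((n : ℝ) + 1 + ε) (by positivity)).2.2.ne
          (measure_mono ?_)
        refine Set.iUnion_subset fun i => fun z hz => ?_
        have h1 : dist (i : X) x0 < n + 1 := Metric.mem_ball.1 i.2.2
        have h2 : dist z (i : X) < ε / 2 := Metric.mem_ball.1 hz
        refine Metric.mem_ball.2 ((dist_triangle z i x0).trans_lt ?_)
        have hεε : ε / 2 < ε := by linarith
        calc dist z (i : X) + dist (i : X) x0 < ε / 2 + (n + 1) := by linarith
          _ ≤ (n : ℝ) + 1 + ε := by linarith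
    have huniv : {i : T | 0 < μ (Metric.ball (i : X) (ε / 2))} = Set.univ := by
      refine Set.eq_univ_of_forall fun i => ?_
      have := (hD (i : X) (ε / 4) (by positivity)).1
      simpa [show 2 * (ε / 4) = ε / 2 by ring] using this
    rw [huniv, Set.countable_univ_iff] at key
    exact Set.countable_coe_iff.1 key
  · -- S is ε-dense
    by_contra hcon
    push_neg at hcon
    have hx : x ∉ S := fun hxS => by
      have := hcon x hxS
      rw [dist_self] at this
      linarith
    have hins : (insert x S).Pairwise fun a b => ε ≤ dist a b := by
      rw [Set.pairwise_insert]
      exact ⟨hSP, fun b hb _ => ⟨(hcon b hb).le, by rw [dist_comm]; exact (hcon b hb).le⟩⟩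
    exact hx (hSmax _ hins (Set.subset_insert x S) (Set.mem_insert x S))

lemma aux_measurable_ball {X : Type*} [MetricSpace X] [MeasurableSpace X] [BorelSpace X]
    [SecondCountableTopology X] (μ : Measure X) [SFinite μ] (ε : ℝ) :
    Measurable fun x => μ (Metric.ball x ε) := by
  have hK : Measurable fun p : X × X => ((Metric.ball p.1 ε).indicator
      (fun _ => (1 : ℝ≥0∞)) p.2) := by
    have hs : MeasurableSet {p : X × X | dist p.2 p.1 < ε} :=
      (isOpen_lt (continuous_dist.comp (continuous_snd.prodMk continuous_fst))
        continuous_const).measurableSet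
    have : (fun p : X × X => (Metric.ball p.1 ε).indicator (fun _ => (1 : ℝ≥0∞)) p.2) =
        {p : X × X | dist p.2 p.1 < ε}.indicator (fun _ => (1 : ℝ≥0∞)) := by
      funext p
      by_cases h : dist p.2 p.1 < ε <;>
        simp [Set.indicator, Metric.mem_ball, h]
    rw [this]
    exact measurable_const.indicator hs
  have := Measurable.lintegral_prod_right' (ν := μ) hK
  convert this using 1
  funext x
  rw [lintegral_indicator measurableSet_ball, setLIntegral_one]

/-- Co-area–type inequality for the near-diagonal energy: there is
`C ≥ 1` such that for every compactly supported continuous `f`, with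
`M_t = {|f| > t}`, the limsup of the coarea-type double integral is bounded by
`C` times the limsup of the near-diagonal energy of `f`. -/
theorem stmt14
    {X : Type*} [MetricSpace X] [CompleteSpace X] [MeasurableSpace X] [BorelSpace X]
    (μ : Measure X) (cD : ℝ≥0∞) (hcD : 1 ≤ cD) (hD : IsDoubling μ cD) :
    ∃ C : ℝ≥0∞, 1 ≤ C ∧ C ≠ ⊤ ∧
      ∀ f : X → ℝ, Continuous f → HasCompactSupport f →
        Filter.limsup
            (fun ε : ℝ => (ENNReal.ofReal ε)⁻¹ *
              ∫⁻ t in Set.Ioi (0 : ℝ),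
                ∫⁻ x in {x : X | t < |f x|},
                  ∫⁻ y in Metric.ball x ε \ {x' : X | t < |f x'|},
                    (μ (Metric.ball x ε) ^ ((1:ℝ)/2) * μ (Metric.ball y ε) ^ ((1:ℝ)/2))⁻¹
                  ∂μ ∂μ ∂(volume : Measure ℝ))
            (𝓝[>] (0 : ℝ)) ≤
          C * Filter.limsup (fun ε : ℝ => diagEnergy μ f ε) (𝓝[>] (0 : ℝ)) := by
  haveI : SigmaFinite μ := aux_sigmaFinite μ cD hD
  haveI : SecondCountableTopology X := aux_secondCountable μ cD hD
  refine ⟨1, le_refl 1, ENNReal.one_ne_top, fun f hf _hsupp => ?_⟩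
  rw [one_mul]
  refine Filter.limsup_le_limsup ?_
  filter_upwards [self_mem_nhdsWithin] with ε (hε : ε ∈ Set.Ioi (0 : ℝ))
  rw [diagEnergy]
  refine mul_le_mul_right ?_ _
  set w : X → X → ℝ≥0∞ := fun x y =>
    (μ (Metric.ball x ε) ^ ((1:ℝ)/2) * μ (Metric.ball y ε) ^ ((1:ℝ)/2))⁻¹ with hw
  have hfm : Measurable f := hf.measurable
  have hb : Measurable fun x => μ (Metric.ball x ε) := aux_measurable_ball μ ε
  have hwm : Measurable fun p : X × X => w p.1 p.2 :=
    (((hb.comp measurable_fst).pow_const _).mul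
      ((hb.comp measurable_snd).pow_const _)).inv
  have hMt : ∀ t : ℝ, MeasurableSet {x : X | t < |f x|} := fun t =>
    measurableSet_lt measurable_const hfm.abs
  -- the combined integrand
  set K : ℝ → X → X → ℝ≥0∞ := fun t x y =>
    if t < |f x| ∧ ¬ t < |f y| ∧ dist x y < ε then w x y else 0 with hK
  have hKset : MeasurableSet {q : ℝ × X × X |
      q.1 < |f q.2.1| ∧ ¬ q.1 < |f q.2.2| ∧ dist q.2.1 q.2.2 < ε} := by
    refine MeasurableSet.inter ?_ (MeasurableSet.inter ?_ ?_)
    · exact measurableSet_lt measurable_fst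
        ((hfm.abs).comp (measurable_fst.comp measurable_snd))
    · exact (measurableSet_lt measurable_fst
        ((hfm.abs).comp (measurable_snd.comp measurable_snd))).compl
    · exact (isOpen_lt (continuous_dist.comp
        ((continuous_fst.comp continuous_snd).prodMk
          (continuous_snd.comp continuous_snd))) continuous_const).measurableSet
  have hKm : Measurable fun q : ℝ × X × X => K q.1 q.2.1 q.2.2 := by
    refine Measurable.ite hKset ?_ measurable_const
    exact hwm.comp measurable_snd
  -- Step 1: rewrite the triple integral with K and drop the restriction to `Ioi 0`
  have step1 : (∫⁻ t in Set.Ioi (0 : ℝ),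
      ∫⁻ x in {x : X | t < |f x|},
        ∫⁻ y in Metric.ball x ε \ {x' : X | t < |f x'|}, w x y ∂μ ∂μ ∂volume) ≤
      ∫⁻ t, ∫⁻ x, ∫⁻ y, K t x y ∂μ ∂μ ∂volume := by
    refine le_trans ?_ (setLIntegral_le_lintegral (Set.Ioi 0)
      fun t => ∫⁻ x, ∫⁻ y, K t x y ∂μ ∂μ)
    refine le_of_eq (lintegral_congr fun t => ?_)
    rw [← lintegral_indicator (hMt t)]
    refine lintegral_congr fun x => ?_
    by_cases hx : t < |f x|
    · rw [Set.indicator_of_mem (show x ∈ {x : X | t < |f x|} from hx)]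
      rw [← lintegral_indicator (measurableSet_ball.diff (hMt t))]
      refine lintegral_congr fun y => ?_
      by_cases hy : y ∈ Metric.ball x ε \ {x' : X | t < |f x'|}
      · rw [Set.indicator_of_mem hy]
        obtain ⟨hy1, hy2⟩ := hy
        simp only [hK]
        exact (if_pos ⟨hx, hy2, by rwa [Metric.mem_ball, dist_comm] at hy1⟩).symm
      · rw [Set.indicator_of_notMem hy]
        simp only [hK]
        refine (if_neg ?_).symm
        rintro ⟨_, h2, h3⟩
        exact hy ⟨by rwa [Metric.mem_ball, dist_comm], h2⟩
    · rw [Set.indicator_of_notMem (show x ∉ {x : X | t < |f x|} from hx)]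
      have hzero : (∫⁻ y, K t x y ∂μ) = ∫⁻ _, (0 : ℝ≥0∞) ∂μ :=
        lintegral_congr fun y => by simp only [hK]; exact if_neg fun h => hx h.1
      rw [hzero, lintegral_zero]
  -- Step 2: Tonelli, move the t-integral to the inside
  have hKm1 : Measurable fun q : (ℝ × X) × X => K q.1.1 q.1.2 q.2 :=
    hKm.comp ((measurable_fst.comp measurable_fst).prodMk
      ((measurable_snd.comp measurable_fst).prodMk measurable_snd))
  have step2 : (∫⁻ t, ∫⁻ x, ∫⁻ y, K t x y ∂μ ∂μ ∂volume) =
      ∫⁻ x, ∫⁻ y, ∫⁻ t, K t x y ∂volume ∂μ ∂μ := by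
    rw [lintegral_lintegral_swap]
    · refine lintegral_congr fun x => ?_
      rw [lintegral_lintegral_swap]
      exact (hKm.comp ((measurable_fst).prodMk
        (measurable_const.prodMk measurable_snd))).aemeasurable
    · exact (hKm1.lintegral_prod_right').aemeasurable
  -- Step 3: the inner t-integral is at most `ofReal |f x - f y| * w x y` on the
  -- near-diagonal
  have step3 : ∀ x y : X, (∫⁻ t, K t x y ∂volume) ≤
      {q : X × X | dist q.1 q.2 < ε}.indicator
        (fun q => ENNReal.ofReal |f q.1 - f q.2| * w q.1 q.2) (x, y) := by
    intro x y
    by_cases hd : dist x y < ε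
    · rw [Set.indicator_of_mem (by exact hd)]
      have hKeq : ∀ t : ℝ, K t x y =
          (Set.Ico |f y| |f x|).indicator (fun _ => w x y) t := by
        intro t
        simp only [hK, Set.indicator, Set.mem_Ico, not_lt]
        by_cases h1 : |f y| ≤ t ∧ t < |f x|
        · rw [if_pos ⟨h1.2, by simpa [not_lt] using h1.1, hd⟩, if_pos h1]
        · rw [if_neg, if_neg h1]
          intro ⟨ha, hb, _⟩
          exact h1 ⟨by simpa [not_lt] using hb, ha⟩
      simp only [hKeq]
      rw [lintegral_indicator_const measurableSet_Ico, Real.volume_Ico]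
      rw [mul_comm]
      refine mul_le_mul_left (ENNReal.ofReal_le_ofReal ?_) _
      exact abs_sub_abs_le_abs_sub _ _
    · rw [Set.indicator_of_notMem (by exact hd)]
      have : ∀ t : ℝ, K t x y = 0 := fun t => by
        simp only [hK]; rw [if_neg (fun h => hd h.2.2)]
      simp only [this, lintegral_zero]
      exact le_refl _
  -- Step 4: identify the right-hand side
  have hS : MeasurableSet {q : X × X | dist q.1 q.2 < ε} :=
    (isOpen_lt continuous_dist continuous_const).measurableSet
  have step4 : (∫⁻ x, ∫⁻ y, {q : X × X | dist q.1 q.2 < ε}.indicator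
        (fun q => ENNReal.ofReal |f q.1 - f q.2| * w q.1 q.2) (x, y) ∂μ ∂μ) =
      ∫⁻ q in {q : X × X | dist q.1 q.2 < ε},
        ENNReal.ofReal |f q.1 - f q.2| /
          (μ (Metric.ball q.1 ε) ^ ((1:ℝ)/2) * μ (Metric.ball q.2 ε) ^ ((1:ℝ)/2))
        ∂(μ.prod μ) := by
    have hg : Measurable fun q : X × X => ENNReal.ofReal |f q.1 - f q.2| * w q.1 q.2 :=
      ((ENNReal.measurable_ofReal.comp
        (((hfm.comp measurable_fst).sub (hfm.comp measurable_snd)).abs)).mul hwm)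
    rw [← lintegral_indicator hS, ← lintegral_prod _ (hg.indicator hS).aemeasurable]
    refine lintegral_congr fun q => ?_
    by_cases hq : dist q.1 q.2 < ε
    · rw [Set.indicator_of_mem (by exact hq), Set.indicator_of_mem (by exact hq),
        div_eq_mul_inv]
    · rw [Set.indicator_of_notMem (by exact hq), Set.indicator_of_notMem (by exact hq)]
  calc (∫⁻ t in Set.Ioi (0 : ℝ),
      ∫⁻ x in {x : X | t < |f x|},
        ∫⁻ y in Metric.ball x ε \ {x' : X | t < |f x'|}, w x y ∂μ ∂μ ∂volume)
      ≤ ∫⁻ t, ∫⁻ x, ∫⁻ y, K t x y ∂μ ∂μ ∂volume := step1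
    _ = ∫⁻ x, ∫⁻ y, ∫⁻ t, K t x y ∂volume ∂μ ∂μ := step2
    _ ≤ ∫⁻ x, ∫⁻ y, {q : X × X | dist q.1 q.2 < ε}.indicator
          (fun q => ENNReal.ofReal |f q.1 - f q.2| * w q.1 q.2) (x, y) ∂μ ∂μ :=
        lintegral_mono fun x => lintegral_mono fun y => step3 x y
    _ = _ := step4
end
end
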